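/- In the Turing-machine encoding, the term representing any reachable machine configuration contains exactly one state atom, and this invariant is preserved by every rewrite rule of the encoding. -/
import Mathlib


namespace CWC

/-- CWC simple terms over atoms `A`: an atom, or a compartment `(wrap ▹ content)`. -/
inductive Tm (A : Type) : Type where
  | atom : A → Tm A
  | comp : List A → List (Tm A) → Tm A

/-- Structural congruence on CWC terms (lists of simple terms): the least
equivalence relation generated by swapping adjacent elements and by the
congruence rule for compartments (closed under multiset union). -/
inductive Cong {A : Type} : List (Tm A) → List (Tm A) → Prop where
  | refl (t : List (Tm A)) : Cong t t
  | symm {t u : List (Tm A)} : Cong t u → Cong u t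
  | trans {t u v : List (Tm A)} : Cong t u → Cong u v → Cong t v
  | swap (t1 : List (Tm A)) (u w : Tm A) (t2 : List (Tm A)) :
      Cong (t1 ++ u :: w :: t2) (t1 ++ w :: u :: t2)
  | comp {a b : List A} {t u : List (Tm A)} :
      a.Perm b → Cong t u → Cong [Tm.comp a t] [Tm.comp b u]
  | app {t u v w : List (Tm A)} : Cong t u → Cong v w → Cong (t ++ v) (u ++ w)

/-- Simple terms up to structural congruence. -/
def tmSetoid (A : Type) : Setoid (Tm A) :=
  ⟨fun t u => Cong [t] [u], ⟨fun t => .refl [t], .symm, .trans⟩⟩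

/-- The multiset of congruence classes of the components of a term. -/
def clsM {A : Type} (t : List (Tm A)) : Multiset (Quotient (tmSetoid A)) :=
  (t.map (Quotient.mk (tmSetoid A)) : List (Quotient (tmSetoid A)))

/-- CWC contexts: a hole, or a compartment containing a context, in parallel
with a term. -/
inductive Ctx (A : Type) : Type where
  | hole : Ctx A
  | node : List A → Ctx A → List (Tm A) → Ctx A

/-- Filling the hole of a context with a term. -/
def Ctx.fill {A : Type} : Ctx A → List (Tm A) → List (Tm A)
  | .hole, t => t
  | .node a C v, t => Tm.comp a (C.fill t) :: v

/-- Context composition: replacing the hole of the first context by the second. -/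
def Ctx.comp {A : Type} : Ctx A → Ctx A → Ctx A
  | .hole, C' => C'
  | .node a C v, C' => .node a (C.comp C') v

/-- The number of holes of a context. -/
def Ctx.holes {A : Type} : Ctx A → Nat
  | .hole => 1
  | .node _ C _ => C.holes

/-- Open simple terms: atoms, term variables, and compartments whose wrap may
contain wrap variables. -/
inductive OT (A : Type) : Type where
  | atom : A → OT A
  | tvar : Nat → OT A
  | comp : List A → List Nat → List (OT A) → OT A

/-- An instantiation maps term variables to terms and wrap variables to
multisets of atoms. -/
structure Inst (A : Type) where
  tv : Nat → List (Tm A)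
  wv : Nat → List A

mutual
/-- Substitution on open simple terms. -/
def substS {A : Type} (σ : Inst A) : OT A → List (Tm A)
  | .atom a => [.atom a]
  | .tvar X => σ.tv X
  | .comp a xs os => [Tm.comp (a ++ xs.flatMap σ.wv) (substL σ os)]
/-- Substitution on open terms. -/
def substL {A : Type} (σ : Inst A) : List (OT A) → List (Tm A)
  | [] => []
  | o :: os => substS σ o ++ substL σ os
end

/-- A CWC system is a set of rewrite rules; the induced reduction relation is
generated by rule application in arbitrary contexts, closed under structural
congruence. -/
inductive Red {A : Type} (R : Set (List (OT A) × List (OT A))) :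
    List (Tm A) → List (Tm A) → Prop where
  | step {P O : List (OT A)} (σ : Inst A) (C : Ctx A) :
      (P, O) ∈ R → Red R (C.fill (substL σ P)) (C.fill (substL σ O))
  | congr {t t' u u' : List (Tm A)} :
      Cong t t' → Red R t' u' → Cong u' u → Red R t u

mutual
/-- The list of atom occurrences of a simple term. -/
def atomsS {A : Type} : Tm A → List A
  | .atom a => [a]
  | .comp w t => w ++ atomsL t
def atomsL {A : Type} : List (Tm A) → List A
  | [] => []
  | t :: ts => atomsS t ++ atomsL ts
end

mutual
/-- The list of atom occurrences of an open simple term. -/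
def atomsOS {A : Type} : OT A → List A
  | .atom a => [a]
  | .tvar _ => []
  | .comp w _ t => w ++ atomsOL t
def atomsOL {A : Type} : List (OT A) → List A
  | [] => []
  | o :: os => atomsOS o ++ atomsOL os
end

mutual
/-- The list of term-variable occurrences of an open simple term. -/
def tvarsS {A : Type} : OT A → List Nat
  | .atom _ => []
  | .tvar X => [X]
  | .comp _ _ t => tvarsL t
def tvarsL {A : Type} : List (OT A) → List Nat
  | [] => []
  | o :: os => tvarsS o ++ tvarsL os
end

mutual
/-- The list of wrap-variable occurrences of an open simple term. -/
def wvarsS {A : Type} : OT A → List Nat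
  | .atom _ => []
  | .tvar _ => []
  | .comp _ xs t => xs ++ wvarsL t
def wvarsL {A : Type} : List (OT A) → List Nat
  | [] => []
  | o :: os => wvarsS o ++ wvarsL os
end

/-- A pattern is linear when each variable occurs at most once in it. -/
def Linear {A : Type} (P : List (OT A)) : Prop :=
  (∀ X : Nat, (tvarsL P).count X ≤ 1) ∧ (∀ x : Nat, (wvarsL P).count x ≤ 1)

/-- A labelled term (atoms of the form `(a, i)`) is completely labelled when no
two occurrences of the same atom carry the same label. -/
def CompletelyLabeled {A : Type} (t : List (Tm (A × Nat))) : Prop :=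
  (atomsL t).Nodup

mutual
/-- `LabS t t⁺` : the labelled simple term `t⁺` is obtained from `t` by
assigning labels to its atoms. -/
inductive LabS {A : Type} : Tm A → Tm (A × Nat) → Prop where
  | atom (a : A) (i : Nat) : LabS (.atom a) (.atom (a, i))
  | comp {w : List A} {w' : List (A × Nat)} {t : List (Tm A)} {t' : List (Tm (A × Nat))} :
      w'.map Prod.fst = w → LabL t t' → LabS (.comp w t) (.comp w' t')
inductive LabL {A : Type} : List (Tm A) → List (Tm (A × Nat)) → Prop where
  | nil : LabL [] []
  | cons {t : Tm A} {t' : Tm (A × Nat)} {ts : List (Tm A)} {ts' : List (Tm (A × Nat))} :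
      LabS t t' → LabL ts ts' → LabL (t :: ts) (t' :: ts')
end

mutual
/-- Erasure of labels from a labelled simple term. -/
def eraseS {A : Type} : Tm (A × Nat) → Tm A
  | .atom p => .atom p.1
  | .comp w t => .comp (w.map Prod.fst) (eraseL t)
def eraseL {A : Type} : List (Tm (A × Nat)) → List (Tm A)
  | [] => []
  | t :: ts => eraseS t :: eraseL ts
end

mutual
/-- Labelling of open simple terms (variables are unaffected). -/
inductive LabOS {A : Type} : OT A → OT (A × Nat) → Prop where
  | atom (a : A) (i : Nat) : LabOS (.atom a) (.atom (a, i))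
  | tvar (X : Nat) : LabOS (.tvar X) (.tvar X)
  | comp {w : List A} {w' : List (A × Nat)} {xs : List Nat}
      {t : List (OT A)} {t' : List (OT (A × Nat))} :
      w'.map Prod.fst = w → LabOL t t' → LabOS (.comp w xs t) (.comp w' xs t')
inductive LabOL {A : Type} : List (OT A) → List (OT (A × Nat)) → Prop where
  | nil : LabOL [] []
  | cons {o : OT A} {o' : OT (A × Nat)} {os : List (OT A)} {os' : List (OT (A × Nat))} :
      LabOS o o' → LabOL os os' → LabOL (o :: os) (o' :: os')
end

/-- Erasure of labels from an instantiation. -/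
def eraseInst {A : Type} (σ : Inst (A × Nat)) : Inst A :=
  ⟨fun X => eraseL (σ.tv X), fun x => (σ.wv x).map Prod.fst⟩

/-- The set of matching instantiations used in the canonical (mass action) rate
function: instantiations `σ` of the variables of `P` by labelled terms such
that `P'σ ≡ t⁺` for some labelling `P'` of `P` and `|Oσ| ≡ u`. -/
def MatchSet {A : Type} (P O : List (OT A)) (tp : List (Tm (A × Nat)))
    (u : List (Tm A)) : Set (Inst (A × Nat)) :=
  {σ | (∀ X : Nat, X ∉ tvarsL P → σ.tv X = []) ∧
       (∀ x : Nat, x ∉ wvarsL P → σ.wv x = []) ∧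
       (∃ P' : List (OT (A × Nat)), LabOL P P' ∧ Cong (substL σ P') tp) ∧
       Cong (substL (eraseInst σ) O) u}


/-- Encoding of the right suffix of the tape (head symbol first), ended by the
right marker `r`: each compartment's wrap holds one tape symbol and its content
encodes the rest of the suffix. -/
def encR {A : Type} (r : A) : List A → Tm A
  | [] => Tm.comp [r] []
  | b :: bs => Tm.comp [b] [encR r bs]

/-- Nesting of the left portion of the tape (leftmost symbol outermost) around
an inner term. -/
def nest {A : Type} : List A → List (Tm A) → List (Tm A)
  | [], inner => inner
  | s :: ls, inner => [Tm.comp [s] (nest ls inner)]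

/-- Encoding of a Turing machine configuration with left tape `left` (leftmost
first), state `q`, head symbol `hd` and right tape `right`; `l`, `r` are the
end-of-tape markers. -/
def encConf {A : Type} (l r : A) (left : List A) (q hd : A) (right : List A) :
    List (Tm A) :=
  [Tm.comp [l] (nest left (Tm.atom q :: [encR r (hd :: right)]))]

/-- The CWC rule `q·(b·y ▹ (x ▹ Z)·Y)·X ↦ (c·y ▹ q'·(x ▹ Z)·Y)·X` encoding the
machine transition `(q,b) → (q',c,right)` (nonempty right tape case), with wrap
variables `y = 0`, `x = 1` and term variables `Z = 0`, `Y = 1`, `X = 2`. -/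
def tmRule {A : Type} (q b q' c : A) : List (OT A) × List (OT A) :=
  ([OT.atom q,
    OT.comp [b] [0] [OT.comp [] [1] [OT.tvar 0], OT.tvar 1],
    OT.tvar 2],
   [OT.comp [c] [0] [OT.atom q', OT.comp [] [1] [OT.tvar 0], OT.tvar 1],
    OT.tvar 2])

mutual
/-- Number of occurrences of state atoms (atoms in `Q`) in a simple term. -/
def stCountS {A : Type} (Q : A → Prop) [DecidablePred Q] : Tm A → Nat
  | .atom a => if Q a then 1 else 0
  | .comp w t => (w.countP fun a => decide (Q a)) + stCountL Q t
def stCountL {A : Type} (Q : A → Prop) [DecidablePred Q] : List (Tm A) → Nat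
  | [] => 0
  | t :: ts => stCountS Q t + stCountL Q ts
end

mutual
/-- Number of occurrences of state atoms in an open simple term. -/
def stCountOS {A : Type} (Q : A → Prop) [DecidablePred Q] : OT A → Nat
  | .atom a => if Q a then 1 else 0
  | .tvar _ => 0
  | .comp w _ t => (w.countP fun a => decide (Q a)) + stCountOL Q t
def stCountOL {A : Type} (Q : A → Prop) [DecidablePred Q] : List (OT A) → Nat
  | [] => 0
  | o :: os => stCountOS Q o + stCountOL Q os
end


section Aux

variable {A : Type} (Q : A → Prop) [DecidablePred Q]

theorem stCountL_append (t u : List (Tm A)) :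
    stCountL Q (t ++ u) = stCountL Q t + stCountL Q u := by
  induction t with
  | nil => simp [stCountL]
  | cons a ts ih => simp [stCountL, ih]; omega

theorem cong_stCount {t u : List (Tm A)} (h : Cong t u) :
    stCountL Q t = stCountL Q u := by
  induction h with
  | refl => rfl
  | symm _ ih => omega
  | trans _ _ ih1 ih2 => omega
  | swap t1 a b t2 =>
      simp [stCountL_append, stCountL]; omega
  | comp hp _ ih =>
      simp [stCountL, stCountS, hp.countP_eq, ih]
  | app _ _ ih1 ih2 => simp [stCountL_append, ih1, ih2]

theorem countP_flatMap (p : A → Bool) (f : Nat → List A) (xs : List Nat) :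
    (xs.flatMap f).countP p = (xs.map fun x => (f x).countP p).sum := by
  induction xs with
  | nil => simp
  | cons x xs ih => simp [List.flatMap_cons, List.countP_append, ih]

mutual
theorem substS_count (σ : Inst A) (o : OT A) :
    stCountL Q (substS σ o) = stCountOS Q o
      + ((tvarsS o).map fun X => stCountL Q (σ.tv X)).sum
      + ((wvarsS o).map fun x => (σ.wv x).countP fun a => decide (Q a)).sum := by
  cases o with
  | atom a => simp [substS, stCountL, stCountS, stCountOS, tvarsS, wvarsS]
  | tvar X => simp [substS, stCountOS, tvarsS, wvarsS, stCountL]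
  | comp w xs os =>
      have h := substL_count σ os
      simp [substS, stCountL, stCountS, stCountOS, tvarsS, wvarsS,
        List.countP_append, countP_flatMap, h]
      omega
theorem substL_count (σ : Inst A) (os : List (OT A)) :
    stCountL Q (substL σ os) = stCountOL Q os
      + ((tvarsL os).map fun X => stCountL Q (σ.tv X)).sum
      + ((wvarsL os).map fun x => (σ.wv x).countP fun a => decide (Q a)).sum := by
  cases os with
  | nil => simp [substL, stCountL, stCountOL, tvarsL, wvarsL]
  | cons o os =>
      have h1 := substS_count σ o
      have h2 := substL_count σ os
      simp [substL, stCountL_append, stCountOL, tvarsL, wvarsL, h1, h2]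
      omega
end

theorem fill_count (C : Ctx A) (t u : List (Tm A)) :
    stCountL Q (C.fill t) + stCountL Q u = stCountL Q (C.fill u) + stCountL Q t := by
  induction C with
  | hole => simp [Ctx.fill]; omega
  | node a C v ih => simp [Ctx.fill, stCountL, stCountS] at *; omega

theorem sum_map_eq_of_count_eq (f : Nat → Nat) {xs ys : List Nat}
    (h : ∀ n, xs.count n = ys.count n) :
    (xs.map f).sum = (ys.map f).sum :=
  ((List.perm_iff_count.mpr h).map f).sum_eq

theorem encR_count (r : A) (hr : ¬ Q r) (bs : List A) (hbs : ∀ a ∈ bs, ¬ Q a) :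
    stCountS Q (encR r bs) = 0 := by
  induction bs with
  | nil => simp [encR, stCountS, stCountL, hr]
  | cons b bs ih =>
      have hb : ¬ Q b := hbs b (by simp)
      simp [encR, stCountS, stCountL, hb,
        ih (fun a ha => hbs a (by simp [ha]))]

theorem nest_count (ls : List A) (hls : ∀ a ∈ ls, ¬ Q a) (inner : List (Tm A)) :
    stCountL Q (nest ls inner) = stCountL Q inner := by
  induction ls with
  | nil => simp [nest]
  | cons s ls ih =>
      have hs : ¬ Q s := hls s (by simp)
      simp [nest, stCountL, stCountS, hs,
        ih (fun a ha => hls a (by simp [ha]))]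

end Aux

/-- In the Turing-machine encoding, the term representing any configuration
contains exactly one state atom, and this invariant is preserved by every
rewrite rule whose sides carry exactly one state atom each and use each
variable equally often. -/
theorem state_invariant {A : Type} (Q : A → Prop) [DecidablePred Q]
    (R : Set (List (OT A) × List (OT A)))
    (hR : ∀ ρ ∈ R, stCountOL Q ρ.1 = 1 ∧ stCountOL Q ρ.2 = 1 ∧
      (∀ X : Nat, (tvarsL ρ.1).count X = (tvarsL ρ.2).count X) ∧
      (∀ x : Nat, (wvarsL ρ.1).count x = (wvarsL ρ.2).count x))
    (l r : A) (hl : ¬ Q l) (hr : ¬ Q r) :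
    (∀ (left : List A) (q hd : A) (right : List A),
      Q q → (∀ a ∈ left, ¬ Q a) → ¬ Q hd → (∀ a ∈ right, ¬ Q a) →
      stCountL Q (encConf l r left q hd right) = 1) ∧
    (∀ t u : List (Tm A), Red R t u → stCountL Q t = 1 → stCountL Q u = 1) := by
  constructor
  · intro left q hd right hq hleft hhd hright
    have he : stCountS Q (encR r (hd :: right)) = 0 := by
      refine encR_count Q r hr _ ?_
      intro a ha
      rcases List.mem_cons.mp ha with h | h
      · simpa [h] using hhd
      · exact hright a h
    simp [encConf, stCountL, stCountS, hl, nest_count Q left hleft, he, hq]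
  · intro t u hred
    induction hred with
    | @step P O σ C hPO =>
        intro ht
        obtain ⟨h1, h2, h3, h4⟩ := hR (P, O) hPO
        have hsub : stCountL Q (substL σ P) = stCountL Q (substL σ O) := by
          rw [substL_count, substL_count, h1, h2,
            sum_map_eq_of_count_eq (fun X => stCountL Q (σ.tv X)) h3,
            sum_map_eq_of_count_eq (fun x => (σ.wv x).countP fun a => decide (Q a)) h4]
        have := fill_count Q C (substL σ P) (substL σ O)
        omega
    | congr hc1 _ hc2 ih =>
        intro ht
        rw [← cong_stCount Q hc2]
        exact ih (by rw [← cong_stCount Q hc1]; exact ht)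

end CWC
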